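/- arXiv:1906.07503 — 2 statements merged into one kernel-verified Lean document; each statement's English description precedes it below -/
import Mathlib

section
/- Let 𝒢 be a finite directed graph with a distinguished vertex * from which every vertex of 𝒢 is reachable by a directed path, and suppose there exist λ > 1 and C > 0 such that the number of directed paths of length n in 𝒢 starting at * is at most C λⁿ for all n ≥ 1. Call a strongly connected component of 𝒢 maximal if the spectral radius of its adjacency matrix equals λ. Then no directed path in 𝒢 begins at a vertex of one maximal component and ends at a vertex of a different maximal component. -/
/-!
Suppose `u` reaches `v` while `U = SCC u` and `W = SCC v` differ. The walk leaves `U` along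
some edge `p → q`, and splitting walks at their first exit from `U` gives
`(Aⁿ⁺¹) u v ≥ ∑_{s+t=n} (A_U ^ s) u p * (A ^ t) q v`.
The spectral radius `λ` of `A_U` is the modulus of an eigenvalue, so the largest row sum of
`A_U ^ s` is at least `λ ^ s`; strong connectivity moves a large entry to the fixed position
`(u, p)` at a nearby time. Hence `(A_U ^ s) u p / λ ^ s` is bounded below by a positive constant
on a set of times with bounded gaps, and so is `(A ^ t) q v / λ ^ t`, through `W`. The Cauchy
product of two such sequences has quadratically growing partial sums, so `(Aⁿ⁺¹) u v / λⁿ` is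
unbounded. But `star` reaches `u` and `Aⁿ` counts walks, so the growth hypothesis bounds it.
-/

open scoped Classical BigOperators ENNReal
open MeasureTheory

noncomputable section

namespace Paper

/-! ### Word metric and hyperbolicity -/

variable {G : Type*} [Group G]

/-- The word length of `g` with respect to a generating set `S`. -/
def wordLength (S : Set G) (g : G) : ℕ :=
  sInf {n | ∃ l : List G, l.length = n ∧ (∀ x ∈ l, x ∈ S) ∧ l.prod = g}

/-- The word metric on `G` determined by `S`. -/
def wordDist (S : Set G) (g h : G) : ℕ :=
  wordLength S (g⁻¹ * h)

/-- A discrete geodesic segment of length `n` in the Cayley graph. -/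
def IsGeodesicSeg (S : Set G) (γ : ℕ → G) (n : ℕ) : Prop :=
  ∀ i, i ≤ n → ∀ j, j ≤ n → (wordDist S (γ i) (γ j) : ℤ) = |(i : ℤ) - (j : ℤ)|

/-- A discrete geodesic of length `n` from `a` to `b` in the Cayley graph. -/
def GeodesicFrom (S : Set G) (γ : ℕ → G) (n : ℕ) (a b : G) : Prop :=
  IsGeodesicSeg S γ n ∧ γ 0 = a ∧ γ n = b ∧ n = wordDist S a b

/-- The side `γ` is contained in the `δ`-neighbourhood of the union of `γ₁` and `γ₂`. -/
def SideThin (S : Set G) (δ : ℝ) (γ : ℕ → G) (n : ℕ) (γ₁ : ℕ → G) (n₁ : ℕ)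
    (γ₂ : ℕ → G) (n₂ : ℕ) : Prop :=
  ∀ i, i ≤ n →
    (∃ j, j ≤ n₁ ∧ (wordDist S (γ i) (γ₁ j) : ℝ) ≤ δ) ∨
    (∃ j, j ≤ n₂ ∧ (wordDist S (γ i) (γ₂ j) : ℝ) ≤ δ)

/-- `G` is hyperbolic with respect to `S`: every geodesic triangle in the Cayley graph is
`δ`-thin, i.e. each side is contained in the `δ`-neighbourhood of the other two sides. -/
def IsHyperbolic (S : Set G) : Prop :=
  ∃ δ : ℝ, 0 ≤ δ ∧ ∀ (a b c : G) (γ₁ γ₂ γ₃ : ℕ → G) (n₁ n₂ n₃ : ℕ),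
    GeodesicFrom S γ₁ n₁ a b → GeodesicFrom S γ₂ n₂ b c → GeodesicFrom S γ₃ n₃ a c →
    SideThin S δ γ₁ n₁ γ₂ n₂ γ₃ n₃ ∧ SideThin S δ γ₂ n₂ γ₁ n₁ γ₃ n₃ ∧
      SideThin S δ γ₃ n₃ γ₁ n₁ γ₂ n₂

/-- `G` is non-elementary: it contains no cyclic subgroup of finite index. -/
def NonElementary (G : Type*) [Group G] : Prop :=
  ¬ ∃ g : G, (Subgroup.zpowers g).FiniteIndex

/-- `S` is a symmetric subset of `G`. -/
def SymmetricSet (S : Set G) : Prop := ∀ g ∈ S, g⁻¹ ∈ S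

/-- `#W_n`, the number of elements of `G` of word length `n`. -/
def Wcard (S : Set G) (n : ℕ) : ℕ := Nat.card {g : G // wordLength S g = n}

/-- `#(W_n ∩ N)`, the number of elements of `N` of word length `n`. -/
def WNcard (S : Set G) (N : Subgroup G) (n : ℕ) : ℕ :=
  Nat.card {g : G // wordLength S g = n ∧ g ∈ N}

/-- Coornaert's purely exponential growth property: `C₁ λ^n ≤ #W_n ≤ C₂ λ^n`. -/
def HasGrowthRate (S : Set G) (lam : ℝ) : Prop :=
  ∃ C₁ C₂ : ℝ, 0 < C₁ ∧ 0 < C₂ ∧ ∀ n : ℕ, 1 ≤ n →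
    C₁ * lam ^ n ≤ (Wcard S n : ℝ) ∧ (Wcard S n : ℝ) ≤ C₂ * lam ^ n

/-! ### Strongly Markov structures -/

/-- The directed paths in the graph with edge set `E ⊆ V × V` starting at the vertex `star`;
a path with `n` edges is recorded by its `n+1` successive vertices. -/
def MarkovPaths (V : Type*) (E : Set (V × V)) (star : V) : Type _ :=
  {p : Σ n : ℕ, Fin (n + 1) → V //
    p.2 0 = star ∧ ∀ i : Fin p.1, (p.2 i.castSucc, p.2 i.succ) ∈ E}

/-- The group element obtained by multiplying the labels along a path. -/
def pathProd {V : Type*} {E : Set (V × V)} {star : V} (lab : V × V → G)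
    (p : MarkovPaths V E star) : G :=
  (List.ofFn fun i : Fin p.1.1 => lab (p.1.2 i.castSucc, p.1.2 i.succ)).prod

/-- A strongly Markov coding of `(G, S)`: a finite directed graph with labels in `S`,
an initial vertex `star` with no incoming edges, such that reading labels along paths
starting at `star` gives a bijection with `G` under which an `n`-edge path corresponds
to an element of word length `n`. -/
def IsMarkovCoding (S : Set G) {V : Type*} (E : Set (V × V)) (star : V)
    (lab : V × V → G) : Prop :=
  (∀ e ∈ E, lab e ∈ S) ∧ (∀ u : V, (u, star) ∉ E) ∧
  Function.Bijective (fun p : MarkovPaths V E star => pathProd lab p) ∧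
  ∀ p : MarkovPaths V E star, wordLength S (pathProd lab p) = p.1.1

/-! ### Directed graphs, components and spectral radii -/

/-- Reachability by a directed path in the graph with edge set `E`. -/
def Reach {V : Type*} (E : Set (V × V)) (u v : V) : Prop :=
  Relation.ReflTransGen (fun a b => (a, b) ∈ E) u v

/-- The strongly connected component of the vertex `u`. -/
def SCC {V : Type*} (E : Set (V × V)) (u : V) : Set V :=
  {v | Reach E u v ∧ Reach E v u}

/-- The 0-1 adjacency (transition) matrix of the graph with edge set `E`. -/
def adjMatrix (V : Type*) (E : Set (V × V)) : Matrix V V ℝ :=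
  fun u v => if (u, v) ∈ E then 1 else 0

/-- The restriction (principal submatrix) of `M` to a set `s` of indices. -/
def restrict {V : Type*} (M : Matrix V V ℝ) (s : Set V) : Matrix s s ℝ :=
  fun u v => M u.1 v.1

/-- The spectral radius of a real matrix: the maximum modulus of its complex eigenvalues. -/
def specRad {n : Type*} [Fintype n] [DecidableEq n] (M : Matrix n n ℝ) : ℝ≥0∞ :=
  spectralRadius ℂ (M.map Complex.ofReal)

/-- The spectral radius of a complex matrix. -/
def specRadC {n : Type*} [Fintype n] [DecidableEq n] (M : Matrix n n ℂ) : ℝ≥0∞ :=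
  spectralRadius ℂ M

/-- `u` belongs to a maximal component: the strongly connected component of `u` has
adjacency matrix of spectral radius `lam`. -/
def IsMaxComp {V : Type*} [Fintype V] (E : Set (V × V)) (lam : ℝ) (u : V) : Prop :=
  specRad (restrict (adjMatrix V E) (SCC E u)) = ENNReal.ofReal lam

/-- The collection of maximal components of the graph. -/
def MaxComps {V : Type*} [Fintype V] (E : Set (V × V)) (lam : ℝ) : Set (Set V) :=
  {s | ∃ u, IsMaxComp E lam u ∧ s = SCC E u}

/-- The matrix `C_j` associated to the maximal component `s`: entries meeting a maximal
component different from `s` are set to zero. -/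
def Cmat {V : Type*} [Fintype V] (E : Set (V × V)) (lam : ℝ) (s : Set V) :
    Matrix V V ℝ := fun u v =>
  if ∃ w, IsMaxComp E lam w ∧ SCC E w ≠ s ∧ (u ∈ SCC E w ∨ v ∈ SCC E w) then 0
  else adjMatrix V E u v

/-- The pairing `⟨t, x⟩ = ∑ i, t i * x i` of `t ∈ ℝ^ν` with `x ∈ ℤ^ν`. -/
def pairing {ν : ℕ} (t : Fin ν → ℝ) (x : Fin ν → ℤ) : ℝ :=
  ∑ i, t i * (x i : ℝ)

/-- `e2πi x = e^{2 π i x}`. -/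
def e2πi (x : ℝ) : ℂ := Complex.exp (((2 * Real.pi * x : ℝ) : ℂ) * Complex.I)

/-- The weighted matrix `C_j(t)`, with entries `e^{2πi⟨t, f(u,v)⟩} C_j(u,v)`. -/
def Ct {V : Type*} [Fintype V] (E : Set (V × V)) (lam : ℝ) (s : Set V) {ν : ℕ}
    (f : V × V → (Fin ν → ℤ)) (t : Fin ν → ℝ) : Matrix V V ℂ :=
  fun u v => e2πi (pairing t (f (u, v))) * (Cmat E lam s u v : ℂ)

/-- `⟨M v_*, 𝟏⟩`, where `v_*` is the indicator vector of `star` and `𝟏` the all-ones vector. -/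
def starPairing {V : Type*} [Fintype V] (M : Matrix V V ℂ) (star : V) : ℂ :=
  dotProduct (fun _ : V => (1 : ℂ))
    (M.mulVec (fun v : V => if v = star then 1 else 0))

/-! ### Cycles, weights, and the groups `Γ_f` and `Δ_f` -/

/-- A cycle of length `k ≥ 1` through vertices of `s`, recorded as `x 0, x 1, …, x k`
with `x 0 = x k` and all steps along edges of `E`. -/
def IsCycleIn {V : Type*} (E : Set (V × V)) (s : Set V) (k : ℕ) (x : ℕ → V) : Prop :=
  0 < k ∧ (∀ i, i ≤ k → x i ∈ s) ∧ x 0 = x k ∧ ∀ i, i < k → (x i, x (i + 1)) ∈ E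

/-- The `f`-weight of a cycle. -/
def cycleWeight {V : Type*} {ν : ℕ} (f : V × V → (Fin ν → ℤ)) (k : ℕ) (x : ℕ → V) :
    Fin ν → ℤ :=
  ∑ i ∈ Finset.range k, f (x i, x (i + 1))

/-- `p` is the period: the greatest common divisor of the lengths of the cycles in `s`. -/
def IsPeriod {V : Type*} (E : Set (V × V)) (s : Set V) (p : ℕ) : Prop :=
  0 < p ∧ (∀ k x, IsCycleIn E s k x → p ∣ k) ∧
    ∀ q : ℕ, (∀ k x, IsCycleIn E s k x → q ∣ k) → q ∣ p

/-- `Γ_f`: the subgroup of `ℤ^ν` generated by the `f`-weights of cycles. -/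
def GammaGroup {V : Type*} (E : Set (V × V)) (s : Set V) {ν : ℕ}
    (f : V × V → (Fin ν → ℤ)) : AddSubgroup (Fin ν → ℤ) :=
  AddSubgroup.closure {w | ∃ k x, IsCycleIn E s k x ∧ w = cycleWeight f k x}

/-- `Δ_f`: the subgroup of differences of `f`-weights of cycles of equal length. -/
def DeltaGroup {V : Type*} (E : Set (V × V)) (s : Set V) {ν : ℕ}
    (f : V × V → (Fin ν → ℤ)) : AddSubgroup (Fin ν → ℤ) :=
  AddSubgroup.closure {w | ∃ k x y, IsCycleIn E s k x ∧ IsCycleIn E s k y ∧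
    w = cycleWeight f k x - cycleWeight f k y}

/-- The edge set of a nonnegative matrix `B`. -/
def Bedges {V : Type*} (B : Matrix V V ℝ) : Set (V × V) := {e | B e.1 e.2 ≠ 0}

section NonnegMatrix

open Finset

variable {α : Type*} [Fintype α]

theorem apply_mul_apply_le_mul_apply {M N : Matrix α α ℝ} (hM : ∀ i j, 0 ≤ M i j)
    (hN : ∀ i j, 0 ≤ N i j) (a b c : α) : M a b * N b c ≤ (M * N) a c := by
  rw [Matrix.mul_apply]
  exact single_le_sum (f := fun z => M a z * N z c)
    (fun z _ => mul_nonneg (hM _ _) (hN _ _)) (mem_univ b)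

theorem mul_apply_nonneg {M N : Matrix α α ℝ} (hM : ∀ i j, 0 ≤ M i j)
    (hN : ∀ i j, 0 ≤ N i j) (a c : α) : 0 ≤ (M * N) a c :=
  sum_nonneg fun _ _ => mul_nonneg (hM _ _) (hN _ _)

theorem apply_mul_apply_mul_apply_le {M N L : Matrix α α ℝ} (hM : ∀ i j, 0 ≤ M i j)
    (hN : ∀ i j, 0 ≤ N i j) (hL : ∀ i j, 0 ≤ L i j) (a b c d : α) :
    M a b * N b c * L c d ≤ (M * N * L) a d :=
  (mul_le_mul_of_nonneg_right (apply_mul_apply_le_mul_apply hM hN a b c) (hL c d)).trans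
    (apply_mul_apply_le_mul_apply (mul_apply_nonneg hM hN) hL a c d)

variable [DecidableEq α]

theorem pow_apply_mul_pow_apply_le {M : Matrix α α ℝ} (hM : ∀ i j, 0 ≤ M i j) (m n : ℕ)
    (a b c : α) : (M ^ m) a b * (M ^ n) b c ≤ (M ^ (m + n)) a c := by
  rw [pow_add]
  exact apply_mul_apply_le_mul_apply (Matrix.pow_apply_nonneg hM m)
    (Matrix.pow_apply_nonneg hM n) a b c

theorem exists_one_le_pow_apply_of_reflTransGen {M : Matrix α α ℝ} (hM : ∀ i j, 0 ≤ M i j)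
    {r : α → α → Prop} (hr : ∀ a b, r a b → 1 ≤ M a b) {a b : α}
    (h : Relation.ReflTransGen r a b) : ∃ n, 1 ≤ (M ^ n) a b := by
  induction h with
  | refl => exact ⟨0, by simp⟩
  | @tail b c _ hbc ih =>
    obtain ⟨n, hn⟩ := ih
    refine ⟨n + 1, le_trans ?_ (pow_apply_mul_pow_apply_le hM n 1 a b c)⟩
    rw [pow_one]
    exact one_le_mul_of_one_le_of_one_le hn (hr b c hbc)

theorem restrict_pow_apply_le {M : Matrix α α ℝ} (hM : ∀ i j, 0 ≤ M i j) (s : Set α) (n : ℕ)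
    (x y : s) : (restrict M s ^ n) x y ≤ (M ^ n) x y := by
  induction n generalizing y with
  | zero =>
    rcases eq_or_ne x y with rfl | hxy
    · simp
    · simp [Matrix.one_apply_ne hxy, Matrix.one_apply_ne (Subtype.coe_ne_coe.mpr hxy)]
  | succ n ih =>
    rw [pow_succ, pow_succ, Matrix.mul_apply, Matrix.mul_apply]
    calc ∑ z : s, (restrict M s ^ n) x z * restrict M s z y
        ≤ ∑ z : s, (M ^ n) x z * M z y :=
          sum_le_sum fun z _ => mul_le_mul_of_nonneg_right (ih z) (hM _ _)
      _ = ∑ z ∈ s.toFinset, (M ^ n) x z * M z y :=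
          sum_set_coe (f := fun z => (M ^ n) x z * M z y) s
      _ ≤ ∑ z, (M ^ n) x z * M z y :=
          sum_le_univ_sum_of_nonneg fun z => mul_nonneg (Matrix.pow_apply_nonneg hM n _ _) (hM _ _)

end NonnegMatrix

section FirstExit

open Finset

/-- Decomposition of `e * a ^ (n + 1)` according to the first factor at which the product
leaves the corner `e`. -/
theorem _root_.IsIdempotentElem.mul_pow_succ_eq {R : Type*} [Ring R] {e : R}
    (he : IsIdempotentElem e) (a : R) (n : ℕ) :
    e * a ^ (n + 1) = ∑ k ∈ antidiagonal n, (e * a * e) ^ k.1 * (e * a * (1 - e)) * a ^ k.2 +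
      (e * a * e) ^ (n + 1) * e := by
  have step : ∀ m, e * a ^ (m + 1) = e * a * e * (e * a ^ m) + e * a * (1 - e) * a ^ m := by
    intro m
    rw [show e * a * e * (e * a ^ m) = e * a * (e * e) * a ^ m by noncomm_ring, he.eq, pow_succ']
    noncomm_ring
  induction n with
  | zero => simp [he.eq, mul_assoc, mul_sub]
  | succ n ih =>
    rw [step, ih, Nat.sum_antidiagonal_succ, mul_add, mul_sum]
    simp only [pow_succ', pow_zero, one_mul, mul_assoc]
    abel

theorem diagonal_indicator_one_nonneg {α : Type*} [DecidableEq α] (T : Set α) (i j : α) :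
    0 ≤ Matrix.diagonal (T.indicator (1 : α → ℝ)) i j := by
  rw [Matrix.diagonal_apply]
  split_ifs
  exacts [Set.indicator_nonneg (fun _ _ => zero_le_one) i, le_rfl]

theorem isIdempotentElem_diagonal_indicator_one {α : Type*} [Fintype α] [DecidableEq α]
    (T : Set α) : IsIdempotentElem (Matrix.diagonal (T.indicator (1 : α → ℝ))) := by
  rw [IsIdempotentElem, Matrix.diagonal_mul_diagonal]
  congr 1
  ext i
  by_cases hi : i ∈ T <;> simp [hi]

theorem sum_antidiagonal_le_pow_succ_apply {V : Type*} [Fintype V] [DecidableEq V]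
    {A : Matrix V V ℝ} (hA : ∀ i j, 0 ≤ A i j) {S : Set V} {x p q : V} (hx : x ∈ S)
    (hp : p ∈ S) (hq : q ∉ S) (y : V) (n : ℕ) :
    ∑ k ∈ antidiagonal n, (restrict A S ^ k.1) ⟨x, hx⟩ ⟨p, hp⟩ * A p q * (A ^ k.2) q y ≤
      (A ^ (n + 1)) x y := by
  set P : Matrix V V ℝ := Matrix.diagonal (S.indicator 1)
  set Q : Matrix V V ℝ := Matrix.diagonal (Sᶜ.indicator 1)
  have hPQ : 1 - P = Q := by
    rw [sub_eq_iff_eq_add', Matrix.diagonal_add]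
    simp [Set.indicator_self_add_compl_apply]
  have hdiag := diagonal_indicator_one_nonneg (α := V)
  have hPAP := mul_apply_nonneg (mul_apply_nonneg (hdiag S) hA) (hdiag S)
  have hPAQ := mul_apply_nonneg (mul_apply_nonneg (hdiag S) hA) (hdiag Sᶜ)
  have hrestrict : restrict (P * A * P) S = restrict A S := by
    ext i j
    simp [restrict, Matrix.mul_diagonal, Matrix.diagonal_mul, P]
  have hexit : (P * A * Q) p q = A p q := by
    simp [Matrix.mul_diagonal, Matrix.diagonal_mul, Set.indicator_of_mem hp,
      Set.indicator_of_mem (Set.mem_compl hq), P, Q]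
  have hrow : (A ^ (n + 1)) x y = (P * A ^ (n + 1)) x y := by
    simp [P, Matrix.diagonal_mul, Set.indicator_of_mem hx]
  rw [hrow, (isIdempotentElem_diagonal_indicator_one S).mul_pow_succ_eq, hPQ,
    Matrix.add_apply, Matrix.sum_apply]
  refine le_add_of_le_of_nonneg (sum_le_sum fun k _ => ?_)
    (mul_apply_nonneg (Matrix.pow_apply_nonneg hPAP _) (hdiag S) x y)
  calc (restrict A S ^ k.1) ⟨x, hx⟩ ⟨p, hp⟩ * A p q * (A ^ k.2) q y
      ≤ ((P * A * P) ^ k.1) x p * (P * A * Q) p q * (A ^ k.2) q y := by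
        rw [hexit, ← hrestrict]
        gcongr
        · exact Matrix.pow_apply_nonneg hA _ _ _
        · exact hA _ _
        · exact restrict_pow_apply_le hPAP S k.1 ⟨x, hx⟩ ⟨p, hp⟩
    _ ≤ _ := apply_mul_apply_mul_apply_le (Matrix.pow_apply_nonneg hPAP _) hPAQ
        (Matrix.pow_apply_nonneg hA _) _ _ _ _

end FirstExit

section Spectral

attribute [local instance] Matrix.linftyOpNormedRing Matrix.linftyOpNormedAlgebra

/-- The spectral radius is attained by some `μ`, and `‖μ ^ t‖ ≤ ‖M ^ t‖`, which for the
`ℓ∞` operator norm is the largest row sum of `M ^ t`. -/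
theorem exists_le_card_mul_pow_apply {α : Type*} [Fintype α] [DecidableEq α] [Nonempty α]
    {M : Matrix α α ℝ} (hM : ∀ i j, 0 ≤ M i j) {lam : ℝ} (hlam : 0 ≤ lam)
    (hspec : specRad M = ENNReal.ofReal lam) (t : ℕ) :
    ∃ x y, lam ^ t ≤ Fintype.card α * (M ^ t) x y := by
  obtain ⟨μ, hμ, hμr⟩ := spectrum.exists_nnnorm_eq_spectralRadius (M.map Complex.ofReal)
  have hμlam : ‖μ‖ = lam := by
    rw [specRad] at hspec
    simpa [hlam] using congrArg ENNReal.toReal (hμr.trans hspec)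
  have hμt : μ ^ t ∈ spectrum ℂ ((M ^ t).map Complex.ofReal) := by
    rw [show (M ^ t).map Complex.ofReal = M.map Complex.ofReal ^ t from
      Matrix.map_pow M Complex.ofRealHom t]
    exact spectrum.pow_image_subset _ _ ⟨μ, hμ, rfl⟩
  obtain ⟨x, -, hx⟩ := Finset.exists_mem_eq_sup Finset.univ Finset.univ_nonempty
    fun i => ∑ j, ‖(M ^ t).map Complex.ofReal i j‖₊
  obtain ⟨y, -, hy⟩ := Finset.exists_max_image Finset.univ (fun j => (M ^ t) x j)
    Finset.univ_nonempty
  refine ⟨x, y, ?_⟩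
  calc lam ^ t = ‖μ ^ t‖ := by rw [norm_pow, hμlam]
    _ ≤ ‖(M ^ t).map Complex.ofReal‖ := spectrum.norm_le_norm_of_mem hμt
    _ = ∑ j, (M ^ t) x j := by
      rw [Matrix.linfty_opNorm_def, hx]
      push_cast
      refine Finset.sum_congr rfl fun j _ => ?_
      simp [abs_of_nonneg (Matrix.pow_apply_nonneg hM t x j)]
    _ ≤ Fintype.card α * (M ^ t) x y := by
      have := Finset.sum_le_card_nsmul Finset.univ ((M ^ t) x) _ hy
      rwa [nsmul_eq_mul, Finset.card_univ] at this

end Spectral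

def SyndeticallyGE (a : ℕ → ℝ) (c : ℝ) (D : ℕ) : Prop :=
  ∀ t, ∃ t', t ≤ t' ∧ t' ≤ t + D ∧ c ≤ a t'

namespace SyndeticallyGE

open Finset

variable {a b : ℕ → ℝ} {c : ℝ} {D : ℕ}

theorem mono_gap (h : SyndeticallyGE a c D) {D' : ℕ} (hD : D ≤ D') : SyndeticallyGE a c D' :=
  fun t => (h t).imp fun _ ⟨h₁, h₂, h₃⟩ => ⟨h₁, by omega, h₃⟩

theorem shift (h : SyndeticallyGE a c D) {K : ℝ} (hK : 0 ≤ K) (s : ℕ)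
    (hab : ∀ t, K * a t ≤ b (t + s)) : SyndeticallyGE b (K * c) (D + s) := fun t =>
  let ⟨t', h₁, h₂, h₃⟩ := h t
  ⟨t' + s, by omega, by omega, (mul_le_mul_of_nonneg_left h₃ hK).trans (hab t')⟩

theorem mul_le_sum_range (h : SyndeticallyGE a c D) (ha : ∀ t, 0 ≤ a t) (m : ℕ) :
    m * c ≤ ∑ t ∈ range (m * (D + 1)), a t := by
  induction m with
  | zero => simp
  | succ m ih =>
    obtain ⟨t', h₁, h₂, h₃⟩ := h (m * (D + 1))
    have hwindow : c ≤ ∑ i ∈ range (D + 1), a (m * (D + 1) + i) := by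
      refine h₃.trans ?_
      have := single_le_sum (f := fun i => a (m * (D + 1) + i)) (fun i _ => ha _)
        (mem_range.mpr (by omega : t' - m * (D + 1) < D + 1))
      simpa [Nat.add_sub_cancel' h₁] using this
    rw [add_one_mul, sum_range_add]
    push_cast
    linarith

end SyndeticallyGE

theorem syndeticallyGE_pow_apply_div {α : Type*} [Fintype α] [DecidableEq α] [Nonempty α]
    {M : Matrix α α ℝ} (hM : ∀ i j, 0 ≤ M i j) (hconn : ∀ x y, ∃ d, 1 ≤ (M ^ d) x y)
    {lam : ℝ} (hlam : 1 ≤ lam) (hspec : specRad M = ENNReal.ofReal lam) (x₀ y₀ : α) :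
    ∃ c > 0, ∃ D, SyndeticallyGE (fun t => (M ^ t) x₀ y₀ / lam ^ t) c D := by
  choose d hd using hconn
  set D := Finset.univ.sup fun p : α × α => d p.1 p.2
  have hdD : ∀ x y, d x y ≤ D := fun x y =>
    Finset.le_sup (f := fun p : α × α => d p.1 p.2) (Finset.mem_univ (x, y))
  have hlam0 : 0 < lam := zero_lt_one.trans_le hlam
  have hcard : (0 : ℝ) < Fintype.card α := by exact_mod_cast Fintype.card_pos
  refine ⟨(Fintype.card α * lam ^ (2 * D))⁻¹, by positivity, 2 * D, fun t => ?_⟩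
  obtain ⟨x, y, hxy⟩ := exists_le_card_mul_pow_apply hM hlam0.le hspec t
  refine ⟨d x₀ x + t + d y y₀, by omega, by linarith [hdD x₀ x, hdD y y₀], ?_⟩
  have hentry : (M ^ t) x y ≤ (M ^ (d x₀ x + t + d y y₀)) x₀ y₀ :=
    calc (M ^ t) x y ≤ (M ^ d x₀ x) x₀ x * (M ^ t) x y :=
          le_mul_of_one_le_left (Matrix.pow_apply_nonneg hM _ _ _) (hd x₀ x)
      _ ≤ (M ^ (d x₀ x + t)) x₀ y := pow_apply_mul_pow_apply_le hM _ _ _ _ _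
      _ ≤ (M ^ (d x₀ x + t)) x₀ y * (M ^ d y y₀) y y₀ :=
          le_mul_of_one_le_right (Matrix.pow_apply_nonneg hM _ _ _) (hd y y₀)
      _ ≤ _ := pow_apply_mul_pow_apply_le hM _ _ _ _ _
  have hpow : lam ^ (d x₀ x + t + d y y₀) ≤ lam ^ t * lam ^ (2 * D) := by
    rw [← pow_add]
    exact pow_le_pow_right₀ hlam (by linarith [hdD x₀ x, hdD y y₀])
  rw [le_div_iff₀ (by positivity), inv_mul_le_iff₀ (by positivity)]
  calc lam ^ (d x₀ x + t + d y y₀) ≤ lam ^ t * lam ^ (2 * D) := hpow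
    _ ≤ Fintype.card α * (M ^ t) x y * lam ^ (2 * D) := by gcongr
    _ ≤ _ := by rw [mul_right_comm]; gcongr

section CauchyProduct

open Finset

theorem sum_range_mul_sum_range_le {a b : ℕ → ℝ} (ha : ∀ t, 0 ≤ a t) (hb : ∀ t, 0 ≤ b t)
    (M : ℕ) : (∑ t ∈ range M, a t) * (∑ t ∈ range M, b t) ≤
      ∑ n ∈ range (2 * M), ∑ k ∈ antidiagonal n, a k.1 * b k.2 := by
  rw [sum_mul_sum, ← sum_product',
    ← sum_fiberwise_of_maps_to (g := fun k : ℕ × ℕ => k.1 + k.2) (t := range (2 * M))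
      fun k hk => by simp only [mem_product, mem_range] at hk ⊢; omega]
  refine sum_le_sum fun n _ => sum_le_sum_of_subset_of_nonneg ?_
    fun k _ _ => mul_nonneg (ha _) (hb _)
  intro k hk
  exact mem_antidiagonal.mpr (mem_filter.mp hk).2

/-- Partial sums of the Cauchy product grow quadratically, which no bounded sequence allows. -/
theorem not_bddAbove_sum_antidiagonal {a b : ℕ → ℝ} {c c' : ℝ} {D D' : ℕ}
    (hac : SyndeticallyGE a c D) (hbc : SyndeticallyGE b c' D') (ha : ∀ t, 0 ≤ a t)
    (hb : ∀ t, 0 ≤ b t) (hc : 0 < c) (hc' : 0 < c') :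
    ¬ BddAbove (Set.range fun n => ∑ k ∈ antidiagonal n, a k.1 * b k.2) := by
  rintro ⟨K, hK⟩
  set W := D + D' + 1
  have key : ∀ m : ℕ, (m * c) * (m * c') ≤ 2 * (m * W) * K := fun m =>
    calc (m * c) * (m * c')
        ≤ (∑ t ∈ range (m * W), a t) * (∑ t ∈ range (m * W), b t) :=
          mul_le_mul ((hac.mono_gap (by omega)).mul_le_sum_range ha m)
            ((hbc.mono_gap (by omega)).mul_le_sum_range hb m) (by positivity)
            (sum_nonneg fun t _ => ha t)
      _ ≤ ∑ n ∈ range (2 * (m * W)), ∑ k ∈ antidiagonal n, a k.1 * b k.2 :=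
          sum_range_mul_sum_range_le ha hb _
      _ ≤ ∑ n ∈ range (2 * (m * W)), K := sum_le_sum fun n _ => hK ⟨n, rfl⟩
      _ = 2 * (m * W) * K := by simp
  have hK0 : 0 < K := by
    have := key 1
    push_cast at this
    nlinarith [mul_pos hc hc']
  obtain ⟨m, hm⟩ := exists_nat_gt (2 * W * K / (c * c'))
  have hm0 : (0 : ℝ) < m := lt_of_le_of_lt (by positivity) hm
  have := key m
  rw [div_lt_iff₀ (by positivity)] at hm
  nlinarith

end CauchyProduct

section Graph

variable {V : Type*} {E : Set (V × V)}

theorem mem_SCC_self (u : V) : u ∈ SCC E u := ⟨.refl, .refl⟩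

theorem SCC_eq_of_mem {u w : V} (h : w ∈ SCC E u) : SCC E w = SCC E u := by
  ext z
  exact ⟨fun hz => ⟨h.1.trans hz.1, hz.2.trans h.2⟩, fun hz => ⟨h.2.trans hz.1, hz.2.trans h.1⟩⟩

theorem reflTransGen_of_mem_SCC {u x y : V} (hx : x ∈ SCC E u) (hy : y ∈ SCC E u) :
    Relation.ReflTransGen (fun a b : SCC E u => (a.1, b.1) ∈ E) ⟨x, hx⟩ ⟨y, hy⟩ := by
  have hxy : Reach E x y := hx.2.trans hy.1
  induction hxy using Relation.ReflTransGen.head_induction_on with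
  | refl => exact .refl
  | head hxc hcy ih => exact .head hxc (ih ⟨hx.1.tail hxc, hcy.trans hy.2⟩)

theorem exists_exit_edge {S : Set V} {x y : V} (h : Reach E x y) (hx : x ∈ S) (hy : y ∉ S) :
    ∃ p q, p ∈ S ∧ q ∉ S ∧ (p, q) ∈ E ∧ Reach E q y := by
  induction h using Relation.ReflTransGen.head_induction_on with
  | refl => exact absurd hx hy
  | @head a c hac hcy ih =>
    by_cases hc : c ∈ S
    · exact ih hc
    · exact ⟨a, c, hx, hc, hac, hcy⟩

def walksFromEquivTail (E : Set (V × V)) (n : ℕ) (a : V) :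
    {x : Fin (n + 2) → V // x 0 = a ∧ ∀ i : Fin (n + 1), (x i.castSucc, x i.succ) ∈ E} ≃
      {y : Fin (n + 1) → V // (a, y 0) ∈ E ∧ ∀ i : Fin n, (y i.castSucc, y i.succ) ∈ E} where
  toFun x := ⟨Fin.tail x.1, by
    obtain ⟨x, rfl, hx⟩ := x
    exact ⟨hx 0, fun i => hx i.succ⟩⟩
  invFun y := ⟨Fin.cons a y.1, rfl, Fin.cases y.2.1 fun i => by simpa using y.2.2 i⟩
  left_inv x := Subtype.ext (by
    obtain ⟨x, rfl, -⟩ := x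
    exact Fin.cons_self_tail x)
  right_inv y := Subtype.ext (Fin.tail_cons (α := fun _ => V) a y.1)

theorem adjMatrix_nonneg (E : Set (V × V)) (a b : V) : 0 ≤ adjMatrix V E a b := by
  unfold adjMatrix
  split_ifs <;> norm_num

theorem adjMatrix_of_mem {a b : V} (h : (a, b) ∈ E) : adjMatrix V E a b = 1 := if_pos h

variable [Fintype V]

theorem exists_one_le_adjMatrix_pow_apply {a b : V} (h : Reach E a b) :
    ∃ n, 1 ≤ (adjMatrix V E ^ n) a b :=
  exists_one_le_pow_apply_of_reflTransGen (adjMatrix_nonneg E)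
    (fun _ _ h => (adjMatrix_of_mem h).ge) h

theorem syndeticallyGE_restrict_adjMatrix_pow {lam : ℝ} {w : V} (hw : IsMaxComp E lam w)
    (hlam : 1 ≤ lam) {x y : V} (hx : x ∈ SCC E w) (hy : y ∈ SCC E w) :
    ∃ c > 0, ∃ D, SyndeticallyGE
      (fun t => (restrict (adjMatrix V E) (SCC E w) ^ t) ⟨x, hx⟩ ⟨y, hy⟩ / lam ^ t) c D :=
  have : Nonempty (SCC E w) := ⟨⟨w, mem_SCC_self w⟩⟩
  syndeticallyGE_pow_apply_div (fun _ _ => adjMatrix_nonneg E _ _)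
    (fun i j => exists_one_le_pow_apply_of_reflTransGen (fun _ _ => adjMatrix_nonneg E _ _)
      (fun _ _ h => (adjMatrix_of_mem h).ge) (reflTransGen_of_mem_SCC i.2 j.2))
    hlam hw _ _

theorem syndeticallyGE_adjMatrix_pow_of_reach {lam : ℝ} {w : V} (hw : IsMaxComp E lam w)
    (hlam : 1 ≤ lam) {q y : V} (hq : Reach E q y) (hy : y ∈ SCC E w) :
    ∃ c > 0, ∃ D, SyndeticallyGE (fun t => (adjMatrix V E ^ t) q y / lam ^ t) c D := by
  obtain ⟨c, hc, D, h⟩ := syndeticallyGE_restrict_adjMatrix_pow hw hlam hy hy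
  obtain ⟨b, hb⟩ := exists_one_le_adjMatrix_pow_apply hq
  have hlam0 : 0 < lam := zero_lt_one.trans_le hlam
  refine ⟨(lam ^ b)⁻¹ * c, by positivity, D + b, h.shift (by positivity) b fun t => ?_⟩
  have hA := adjMatrix_nonneg E (V := V)
  have hentry : (restrict (adjMatrix V E) (SCC E w) ^ t) ⟨y, hy⟩ ⟨y, hy⟩ ≤
      (adjMatrix V E ^ (t + b)) q y :=
    calc _ ≤ (adjMatrix V E ^ t) y y := restrict_pow_apply_le hA _ t _ _
      _ ≤ (adjMatrix V E ^ b) q y * (adjMatrix V E ^ t) y y :=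
        le_mul_of_one_le_left (Matrix.pow_apply_nonneg hA _ _ _) hb
      _ ≤ _ := add_comm t b ▸ pow_apply_mul_pow_apply_le hA _ _ _ _ _
  calc (lam ^ b)⁻¹ * ((restrict (adjMatrix V E) (SCC E w) ^ t) ⟨y, hy⟩ ⟨y, hy⟩ / lam ^ t)
      = (restrict (adjMatrix V E) (SCC E w) ^ t) ⟨y, hy⟩ ⟨y, hy⟩ / lam ^ (t + b) := by
        rw [pow_add lam t b]
        field_simp
    _ ≤ _ := by gcongr

theorem card_walks_from_eq_sum_pow_apply (E : Set (V × V)) (n : ℕ) (a : V) :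
    (Nat.card {x : Fin (n + 1) → V // x 0 = a ∧ ∀ i : Fin n, (x i.castSucc, x i.succ) ∈ E} : ℝ)
      = ∑ y, (adjMatrix V E ^ n) a y := by
  induction n generalizing a with
  | zero =>
    rw [Nat.card_eq_one_iff_exists.mpr ⟨⟨fun _ => a, rfl, Fin.elim0⟩, fun x =>
      Subtype.ext (funext fun i => by rw [Fin.fin_one_eq_zero i]; exact x.2.1)⟩]
    simp [Matrix.one_apply]
  | succ n ih =>
    have hfiber : ∀ c, Nat.card {y : Fin (n + 1) → V //
        ((a, y 0) ∈ E ∧ ∀ i : Fin n, (y i.castSucc, y i.succ) ∈ E) ∧ y 0 = c} =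
        if (a, c) ∈ E then Nat.card {y : Fin (n + 1) → V //
          y 0 = c ∧ ∀ i : Fin n, (y i.castSucc, y i.succ) ∈ E} else 0 := by
      intro c
      split_ifs with hac
      · exact Nat.card_congr (Equiv.subtypeEquivRight fun y => by
          constructor
          · rintro ⟨⟨-, hy⟩, rfl⟩; exact ⟨rfl, hy⟩
          · rintro ⟨rfl, hy⟩; exact ⟨⟨hac, hy⟩, rfl⟩)
      · rw [Nat.card_eq_zero]
        exact Or.inl ⟨fun y => hac (y.2.2 ▸ y.2.1.1)⟩
    rw [Nat.card_congr (walksFromEquivTail E n a), Nat.card_eq_fintype_card, Fintype.card_subtype,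
      Finset.card_eq_sum_card_fiberwise (f := fun y => y 0) (t := Finset.univ) (by simp)]
    simp only [Finset.filter_filter]
    simp_rw [← Fintype.card_subtype, ← Nat.card_eq_fintype_card, hfiber]
    simp only [Nat.cast_sum, Nat.cast_ite, Nat.cast_zero, ih, pow_succ', Matrix.mul_apply,
      adjMatrix]
    rw [Finset.sum_comm]
    simp

open Finset in
theorem sum_antidiagonal_div_pow_le {lam : ℝ} (hlam : 0 ≤ lam) {S : Set V} {x p q : V}
    (hx : x ∈ S) (hp : p ∈ S) (hq : q ∉ S) (hpq : (p, q) ∈ E) (y : V) (n : ℕ) :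
    ∑ k ∈ antidiagonal n, (restrict (adjMatrix V E) S ^ k.1) ⟨x, hx⟩ ⟨p, hp⟩ / lam ^ k.1 *
      ((adjMatrix V E ^ k.2) q y / lam ^ k.2) ≤ (adjMatrix V E ^ (n + 1)) x y / lam ^ n := by
  calc _ = (∑ k ∈ antidiagonal n, (restrict (adjMatrix V E) S ^ k.1) ⟨x, hx⟩ ⟨p, hp⟩ *
          adjMatrix V E p q * (adjMatrix V E ^ k.2) q y) / lam ^ n := by
        rw [sum_div]
        refine sum_congr rfl fun k hk => ?_
        rw [adjMatrix_of_mem hpq, mul_one, ← mem_antidiagonal.mp hk, pow_add, div_mul_div_comm]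
    _ ≤ _ := by
        gcongr
        exact sum_antidiagonal_le_pow_succ_apply (adjMatrix_nonneg E) _ hp hq y n

theorem exists_adjMatrix_pow_succ_apply_le {star u : V} (hu : Reach E star u) {lam C : ℝ}
    (hcount : ∀ n : ℕ, 1 ≤ n →
      (Nat.card {x : Fin (n + 1) → V //
          x 0 = star ∧ ∀ i : Fin n, (x i.castSucc, x i.succ) ∈ E} : ℝ) ≤ C * lam ^ n)
    (y : V) : ∃ K, ∀ n, (adjMatrix V E ^ (n + 1)) u y ≤ K * lam ^ (n + 1) := by
  obtain ⟨e, he⟩ := exists_one_le_adjMatrix_pow_apply hu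
  have hA := adjMatrix_nonneg E (V := V)
  refine ⟨C * lam ^ e, fun n => ?_⟩
  calc (adjMatrix V E ^ (n + 1)) u y
      ≤ (adjMatrix V E ^ e) star u * (adjMatrix V E ^ (n + 1)) u y :=
        le_mul_of_one_le_left (Matrix.pow_apply_nonneg hA _ _ _) he
    _ ≤ (adjMatrix V E ^ (e + (n + 1))) star y := pow_apply_mul_pow_apply_le hA _ _ _ _ _
    _ ≤ ∑ z, (adjMatrix V E ^ (e + (n + 1))) star z :=
        Finset.single_le_sum (fun z _ => Matrix.pow_apply_nonneg hA _ _ z) (Finset.mem_univ y)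
    _ = _ := (card_walks_from_eq_sum_pow_apply E _ star).symm
    _ ≤ C * lam ^ (e + (n + 1)) := hcount _ (by omega)
    _ = C * lam ^ e * lam ^ (n + 1) := by ring

end Graph

theorem statement5_general {V : Type*} [Fintype V] (E : Set (V × V)) (star : V)
    (hreach : ∀ v : V, Reach E star v)
    (lam C : ℝ) (hlam : 1 < lam)
    (hcount : ∀ n : ℕ, 1 ≤ n →
      (Nat.card {x : Fin (n + 1) → V //
          x 0 = star ∧ ∀ i : Fin n, (x i.castSucc, x i.succ) ∈ E} : ℝ) ≤ C * lam ^ n)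
    (u v : V) (hu : IsMaxComp E lam u) (hv : IsMaxComp E lam v)
    (huv : Reach E u v) :
    SCC E u = SCC E v := by
  by_contra hne
  have hlam0 : 0 < lam := zero_lt_one.trans hlam
  obtain ⟨p, q, hp, hq, hpq, hqv⟩ :=
    exists_exit_edge huv (mem_SCC_self u) fun hv => hne (SCC_eq_of_mem hv).symm
  obtain ⟨c₁, hc₁, D₁, hin⟩ := syndeticallyGE_restrict_adjMatrix_pow hu hlam.le (mem_SCC_self u) hp
  obtain ⟨c₂, hc₂, D₂, hout⟩ :=
    syndeticallyGE_adjMatrix_pow_of_reach hv hlam.le hqv (mem_SCC_self v)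
  obtain ⟨K, hK⟩ := exists_adjMatrix_pow_succ_apply_le (hreach u) hcount v
  refine not_bddAbove_sum_antidiagonal hin hout
    (fun t => div_nonneg (Matrix.pow_apply_nonneg (fun _ _ => adjMatrix_nonneg E _ _) _ _ _)
      (pow_nonneg hlam0.le t))
    (fun t => div_nonneg (Matrix.pow_apply_nonneg (adjMatrix_nonneg E) _ _ _)
      (pow_nonneg hlam0.le t)) hc₁ hc₂ ⟨K * lam, ?_⟩
  rintro _ ⟨n, rfl⟩
  calc _ ≤ (adjMatrix V E ^ (n + 1)) u v / lam ^ n :=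
        sum_antidiagonal_div_pow_le hlam0.le (mem_SCC_self u) hp hq hpq v n
    _ ≤ K * lam ^ (n + 1) / lam ^ n := by gcongr; exact hK n
    _ = K * lam := by field_simp; ring

/-- Let `𝒢` be a finite directed graph with a vertex `star` from which
every vertex is reachable, and suppose the number of directed paths of length `n`
starting at `star` is at most `C λⁿ` (`λ > 1`, `C > 0`). Then no directed path begins in
one maximal component (spectral radius `λ`) and ends in a different maximal component. -/
theorem statement5 {V : Type*} [Fintype V] (E : Set (V × V)) (star : V)
    (hreach : ∀ v : V, Reach E star v)
    (lam C : ℝ) (hlam : 1 < lam) (hC : 0 < C)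
    (hcount : ∀ n : ℕ, 1 ≤ n →
      (Nat.card {x : Fin (n + 1) → V //
          x 0 = star ∧ ∀ i : Fin n, (x i.castSucc, x i.succ) ∈ E} : ℝ) ≤ C * lam ^ n)
    (u v : V) (hu : IsMaxComp E lam u) (hv : IsMaxComp E lam v)
    (huv : Reach E u v) :
    SCC E u = SCC E v :=
  statement5_general E star hreach lam C hlam hcount u v hu hv huv

end Paper
end
end

section
/- Let B be an irreducible 0–1 square matrix with period p, with edge set E = {(u,v) : B(u,v) = 1} and vertex set V, and let f : E → ℤ^ν. Suppose that for every t ∈ ℝ^ν with t ∉ ℤ^ν, the function (u,v) ↦ ⟨t, f(u,v)⟩ on E is not cohomologous to a constant. Then the quotient group Γ_f/Δ_f is finite. -/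
open scoped Classical BigOperators ENNReal
open MeasureTheory

noncomputable section

namespace Paper

/-! ### Word metric and hyperbolicity -/

variable {G : Type*} [Group G]

/-!
Running a cycle `γ` of length `k` around `l` times and a cycle `γ'` of length `l` around `k`
times gives two cycles of length `k l`, so `l • w(γ) - k • w(γ') ∈ Δ_f`. Hence for a linear
form `t` vanishing on `Δ_f` the sum of `⟨t, f⟩` over a cycle is proportional to its length,
which makes `⟨t, f⟩` cohomologous to a constant. A nonzero rational such `t`, suitably
rescaled, would contradict the hypothesis; so `Δ_f` spans `ℚ^ν`, every element of `ℤ^ν` has a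
nonzero multiple in `Δ_f`, and the finitely generated torsion group `ℤ^ν / Δ_f`, which contains
`Γ_f / Δ_f`, is finite.
-/

section LinearAlgebra

lemma exists_zsmul_mem_span_int {W : Type*} [AddCommGroup W] [Module ℚ W] {s : Set W} {x : W}
    (hx : x ∈ Submodule.span ℚ s) : ∃ m : ℤ, m ≠ 0 ∧ m • x ∈ Submodule.span ℤ s := by
  induction hx using Submodule.span_induction with
  | mem w hw => exact ⟨1, one_ne_zero, by simpa using Submodule.subset_span hw⟩
  | zero => exact ⟨1, one_ne_zero, by simp⟩
  | add a b _ _ iha ihb =>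
    obtain ⟨ma, hma, ha⟩ := iha
    obtain ⟨mb, hmb, hb⟩ := ihb
    refine ⟨mb * ma, mul_ne_zero hmb hma, ?_⟩
    rw [smul_add, mul_smul, mul_comm, mul_smul]
    exact add_mem (Submodule.smul_mem _ _ ha) (Submodule.smul_mem _ _ hb)
  | smul q a _ ih =>
    obtain ⟨m, hm, hma⟩ := ih
    refine ⟨q.den * m, mul_ne_zero (by exact_mod_cast q.den_ne_zero) hm, ?_⟩
    have hden : (q.den * m : ℤ) • q • a = q.num • m • a := by
      simp only [← Int.cast_smul_eq_zsmul ℚ, smul_smul]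
      push_cast
      rw [← Rat.mul_den_eq_num]
      ring_nf
    rw [hden]
    exact Submodule.smul_mem _ _ hma

lemma finite_quotient_of_forall_annihilator_eq_zero {ι : Type*} [Fintype ι]
    (Δ : AddSubgroup (ι → ℤ)) (h : ∀ t : ι → ℚ, (∀ d ∈ Δ, ∑ i, t i * d i = 0) → t = 0) :
    Finite ((ι → ℤ) ⧸ Δ) := by
  let cast : (ι → ℤ) →+ (ι → ℚ) := (Int.castAddHom ℚ).compLeft ι
  have hspan : Submodule.span ℚ (cast '' Δ) = ⊤ := by
    by_contra hne
    obtain ⟨φ, hφ, hφΔ⟩ := Submodule.exists_dual_map_eq_bot_of_lt_top (lt_top_iff_ne_top.2 hne)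
      inferInstance
    set t : ι → ℚ := fun i => φ fun j => if i = j then 1 else 0
    have hφ_apply : ∀ x, φ x = ∑ i, x i * t i := fun x => φ.pi_apply_eq_sum_univ x
    have ht : t = 0 := h t fun d hd => by
      have hφd : φ (cast d) = 0 :=
        LinearMap.le_ker_iff_map.2 hφΔ (Submodule.subset_span ⟨d, hd, rfl⟩)
      simpa [hφ_apply, cast, mul_comm] using hφd
    exact hφ (LinearMap.ext fun x => by simp [hφ_apply, ht])
  have htorsion : ∀ x : ι → ℤ, ∃ m : ℤ, m ≠ 0 ∧ m • x ∈ Δ := by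
    intro x
    obtain ⟨m, hm, hmx⟩ := exists_zsmul_mem_span_int (hspan ▸ Submodule.mem_top : cast x ∈ _)
    rw [← AddSubgroup.coe_map, ← Submodule.mem_toAddSubgroup, Submodule.span_int_eq,
      ← map_zsmul] at hmx
    obtain ⟨d, hd, hdx⟩ := hmx
    exact ⟨m, hm, Int.cast_injective.comp_left hdx ▸ hd⟩
  have : AddGroup.FG (ι → ℤ) := Module.Finite.iff_addGroup_fg.mp inferInstance
  refine AddCommGroup.finite_of_fg_isAddTorsion _ fun q => ?_
  obtain ⟨x, rfl⟩ := QuotientAddGroup.mk_surjective q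
  obtain ⟨m, hm, hmx⟩ := htorsion x
  exact isOfFinAddOrder_iff_zsmul_eq_zero.2
    ⟨m, hm, by rw [← QuotientAddGroup.mk_zsmul, QuotientAddGroup.eq_zero_iff]; exact hmx⟩

end LinearAlgebra

section Walks

variable {V : Type*}

def IsWalk (E : Set (V × V)) (k : ℕ) (x : ℕ → V) : Prop :=
  ∀ i < k, (x i, x (i + 1)) ∈ E

def walkSum {M : Type*} [AddCommMonoid M] (g : V × V → M) (k : ℕ) (x : ℕ → V) : M :=
  ∑ i ∈ Finset.range k, g (x i, x (i + 1))

def walkAppend (k : ℕ) (x y : ℕ → V) : ℕ → V := fun i => if i < k then x i else y (i - k)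

variable {E : Set (V × V)} {k l i : ℕ} {x y : ℕ → V}

lemma walkAppend_of_lt (h : i < k) : walkAppend k x y i = x i := if_pos h

lemma walkAppend_of_le (h : k ≤ i) : walkAppend k x y i = y (i - k) := if_neg (not_lt.2 h)

lemma walkAppend_zero (hxy : x k = y 0) : walkAppend k x y 0 = x 0 := by
  rcases Nat.eq_zero_or_pos k with rfl | hk
  · simp [walkAppend, hxy]
  · exact walkAppend_of_lt hk

lemma walkAppend_add : walkAppend k x y (k + l) = y l := by
  simp [walkAppend]

lemma walkAppend_succ_of_lt (hxy : x k = y 0) (h : i < k) :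
    walkAppend k x y (i + 1) = x (i + 1) := by
  rcases (Nat.succ_le_of_lt h).lt_or_eq with h' | h'
  · exact walkAppend_of_lt h'
  · rw [walkAppend_of_le h'.ge, h', Nat.sub_self, ← hxy, ← h']

lemma walkAppend_add_succ : walkAppend k x y (k + i + 1) = y (i + 1) := by
  rw [add_assoc, walkAppend_add]

lemma IsWalk.append (hx : IsWalk E k x) (hy : IsWalk E l y) (hxy : x k = y 0) :
    IsWalk E (k + l) (walkAppend k x y) := by
  intro i hi
  rcases lt_or_ge i k with h | h
  · rw [walkAppend_of_lt h, walkAppend_succ_of_lt hxy h]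
    exact hx i h
  · obtain ⟨j, rfl⟩ := Nat.exists_eq_add_of_le h
    rw [walkAppend_add, walkAppend_add_succ]
    exact hy j (by omega)

lemma walkSum_append {M : Type*} [AddCommMonoid M] (g : V × V → M) (hxy : x k = y 0) :
    walkSum g (k + l) (walkAppend k x y) = walkSum g k x + walkSum g l y := by
  unfold walkSum
  rw [Finset.sum_range_add]
  congr 1
  · refine Finset.sum_congr rfl fun i hi => ?_
    rw [Finset.mem_range] at hi
    rw [walkAppend_of_lt hi, walkAppend_succ_of_lt hxy hi]
  · refine Finset.sum_congr rfl fun i _ => ?_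
    rw [walkAppend_add, walkAppend_add_succ]

lemma isWalk_edge {u v : V} (huv : (u, v) ∈ E) :
    IsWalk E 1 (fun i => if i = 0 then u else v) := by
  intro i hi
  obtain rfl : i = 0 := by omega
  simpa using huv

lemma walkSum_edge {M : Type*} [AddCommMonoid M] (g : V × V → M) (u v : V) :
    walkSum g 1 (fun i => if i = 0 then u else v) = g (u, v) := by
  simp [walkSum]

lemma exists_isWalk_of_transGen {u v : V} (h : Relation.TransGen (fun a b => (a, b) ∈ E) u v) :
    ∃ k x, 0 < k ∧ x 0 = u ∧ x k = v ∧ IsWalk E k x := by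
  induction h with
  | @single b hb => exact ⟨1, _, one_pos, rfl, rfl, isWalk_edge hb⟩
  | @tail b c _ hbc ih =>
    obtain ⟨k, x, hk, hx0, hxk, hx⟩ := ih
    refine ⟨k + 1, walkAppend k x (fun i => if i = 0 then b else c), by omega, ?_, ?_,
      hx.append (isWalk_edge hbc) hxk⟩
    · rw [walkAppend_zero hxk, hx0]
    · rw [walkAppend_add]; rfl

lemma exists_isWalk_nsmul {M : Type*} [AddCommMonoid M] (g : V × V → M)
    (hx : IsWalk E k x) (hcl : x k = x 0) (m : ℕ) :
    ∃ z, z 0 = x 0 ∧ z (m * k) = x 0 ∧ IsWalk E (m * k) z ∧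
      walkSum g (m * k) z = m • walkSum g k x := by
  induction m with
  | zero => exact ⟨fun _ => x 0, rfl, rfl, fun i hi => by simp at hi, by simp [walkSum]⟩
  | succ m ih =>
    obtain ⟨z, hz0, hzm, hz, hzg⟩ := ih
    refine ⟨walkAppend (m * k) z x, by rw [walkAppend_zero hzm, hz0], ?_, ?_, ?_⟩
    · rw [Nat.succ_mul, walkAppend_add, hcl]
    · rw [Nat.succ_mul]; exact hz.append hx hzm
    · rw [Nat.succ_mul, walkSum_append g hzm, hzg, succ_nsmul]

end Walks

section Cycles

variable {V : Type*} {E : Set (V × V)} {k l : ℕ} {x y : ℕ → V}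

lemma isCycleIn_univ_iff : IsCycleIn E Set.univ k x ↔ 0 < k ∧ x k = x 0 ∧ IsWalk E k x := by
  simp [IsCycleIn, IsWalk, eq_comm]

lemma IsCycleIn.exists_nsmul {ν : ℕ} (f : V × V → (Fin ν → ℤ))
    (hx : IsCycleIn E Set.univ k x) {m : ℕ} (hm : 0 < m) :
    ∃ z, IsCycleIn E Set.univ (m * k) z ∧ cycleWeight f (m * k) z = m • cycleWeight f k x := by
  obtain ⟨hk, hcl, hw⟩ := isCycleIn_univ_iff.1 hx
  obtain ⟨z, hz0, hzm, hz, hzf⟩ := exists_isWalk_nsmul f hw hcl m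
  exact ⟨z, isCycleIn_univ_iff.2 ⟨Nat.mul_pos hm hk, hzm.trans hz0.symm, hz⟩, hzf⟩

lemma nsmul_cycleWeight_sub_mem_deltaGroup {ν : ℕ} (f : V × V → (Fin ν → ℤ))
    (hx : IsCycleIn E Set.univ k x) (hy : IsCycleIn E Set.univ l y) :
    l • cycleWeight f k x - k • cycleWeight f l y ∈ DeltaGroup E Set.univ f := by
  obtain ⟨z₁, hz₁, hz₁f⟩ := hx.exists_nsmul f hy.1
  obtain ⟨z₂, hz₂, hz₂f⟩ := hy.exists_nsmul f hx.1
  rw [mul_comm] at hz₂ hz₂f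
  exact AddSubgroup.subset_closure ⟨l * k, z₁, z₂, hz₁, hz₂, by rw [hz₁f, hz₂f]⟩

lemma exists_isCycleIn_univ (hirr : ∀ u v : V, Relation.TransGen (fun a b => (a, b) ∈ E) u v)
    (v : V) : ∃ k x, IsCycleIn E Set.univ k x := by
  obtain ⟨k, x, hk, hx0, hxk, hx⟩ := exists_isWalk_of_transGen (hirr v v)
  exact ⟨k, x, isCycleIn_univ_iff.2 ⟨hk, hxk.trans hx0.symm, hx⟩⟩

end Cycles

section Cohomology

variable {V : Type*} {E : Set (V × V)}

/-- `h v` is the excess over `c` of the sum of `g` along a fixed walk from a base point to `v`. -/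
lemma exists_cohomologous_of_walkSum_cycle [Nonempty V]
    (hirr : ∀ u v : V, Relation.TransGen (fun a b => (a, b) ∈ E) u v) (g : V × V → ℝ) (c : ℝ)
    (hcyc : ∀ k x, IsCycleIn E Set.univ k x → walkSum g k x = c * k) :
    ∃ h : V → ℝ, ∀ u v : V, (u, v) ∈ E → g (u, v) = c + h v - h u := by
  have hloop : ∀ {k l : ℕ} {x y : ℕ → V}, 0 < k → IsWalk E k x → IsWalk E l y →
      x k = y 0 → y l = x 0 → walkSum g k x + walkSum g l y = c * (k + l) := by
    intro k l x y hk hx hy hxy hyx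
    have hcl : walkAppend k x y (k + l) = walkAppend k x y 0 := by
      rw [walkAppend_add, walkAppend_zero hxy, hyx]
    rw [← walkSum_append g hxy, hcyc _ _ (isCycleIn_univ_iff.2 ⟨by omega, hcl, hx.append hy hxy⟩)]
    push_cast
    ring
  let v₀ : V := Classical.arbitrary V
  choose k x hk hx0 hxk hx using fun v => exists_isWalk_of_transGen (hirr v₀ v)
  choose l y _ hy0 hyl hy using fun v => exists_isWalk_of_transGen (hirr v v₀)
  refine ⟨fun v => walkSum g (k v) (x v) - c * k v, fun u v huv => ?_⟩
  have hv := hloop (hk v) (hx v) (hy v) ((hxk v).trans (hy0 v).symm)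
    ((hyl v).trans (hx0 v).symm)
  have hedge : x u (k u) = (fun i => if i = 0 then u else v) 0 := hxk u
  have hu := hloop (Nat.add_pos_left (hk u) 1) ((hx u).append (isWalk_edge huv) hedge) (hy v)
    (by rw [walkAppend_add]; exact (hy0 v).symm)
    (by rw [hyl, walkAppend_zero hedge, hx0])
  rw [walkSum_append g hedge, walkSum_edge] at hu
  push_cast at hu
  linarith

end Cohomology

section Pairing

variable {ν : ℕ}

def pairingHom (t : Fin ν → ℝ) : (Fin ν → ℤ) →+ ℝ where
  toFun := pairing t
  map_zero' := by simp [pairing]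
  map_add' a b := by simp [pairing, mul_add, Finset.sum_add_distrib]

lemma pairingHom_apply (t : Fin ν → ℝ) (w : Fin ν → ℤ) : pairingHom t w = pairing t w := rfl

lemma exists_cohomologous_of_pairing_deltaGroup {V : Type*} {E : Set (V × V)}
    (hirr : ∀ u v : V, Relation.TransGen (fun a b => (a, b) ∈ E) u v)
    (f : V × V → (Fin ν → ℤ)) (t : Fin ν → ℝ)
    (ht : ∀ d ∈ DeltaGroup E Set.univ f, pairing t d = 0) :
    ∃ (c : ℝ) (h : V → ℝ), ∀ u v : V, (u, v) ∈ E → pairing t (f (u, v)) = c + h v - h u := by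
  cases isEmpty_or_nonempty V with
  | inl _ => exact ⟨0, 0, fun u => isEmptyElim u⟩
  | inr _ =>
    obtain ⟨L, x₀, hx₀⟩ := exists_isCycleIn_univ hirr (Classical.arbitrary V)
    have hL : (L : ℝ) ≠ 0 := by exact_mod_cast hx₀.1.ne'
    refine ⟨pairing t (cycleWeight f L x₀) / L,
      exists_cohomologous_of_walkSum_cycle hirr (fun e => pairing t (f e)) _ fun k x hx => ?_⟩
    have hΔ := ht _ (nsmul_cycleWeight_sub_mem_deltaGroup f hx hx₀)
    have hsum : walkSum (fun e => pairing t (f e)) k x = pairing t (cycleWeight f k x) :=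
      (map_sum (pairingHom t) _ _).symm
    rw [← pairingHom_apply, map_sub, map_nsmul, map_nsmul, nsmul_eq_mul, nsmul_eq_mul,
      sub_eq_zero, pairingHom_apply, pairingHom_apply] at hΔ
    rw [hsum]
    field_simp
    linarith

/-- Rescaling `t` so that its `i₀`-th coordinate becomes `1/2` makes it non-integral. -/
lemma exists_nonintegral_cohomologous_of_annihilator {V : Type*} {E : Set (V × V)}
    (hirr : ∀ u v : V, Relation.TransGen (fun a b => (a, b) ∈ E) u v)
    (f : V × V → (Fin ν → ℤ)) {t : Fin ν → ℚ} (ht0 : t ≠ 0)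
    (ht : ∀ d ∈ DeltaGroup E Set.univ f, ∑ i, t i * d i = 0) :
    ∃ τ : Fin ν → ℝ, (¬ ∀ i, ∃ m : ℤ, τ i = m) ∧
      ∃ (c : ℝ) (h : V → ℝ), ∀ u v : V, (u, v) ∈ E → pairing τ (f (u, v)) = c + h v - h u := by
  obtain ⟨i₀, hi₀⟩ := Function.ne_iff.mp ht0
  have hti₀ : (t i₀ : ℝ) ≠ 0 := by exact_mod_cast hi₀
  refine ⟨fun i => t i / (2 * t i₀), fun hint => ?_,
    exists_cohomologous_of_pairing_deltaGroup hirr f _ fun d hd => ?_⟩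
  · obtain ⟨m, hm : (t i₀ : ℝ) / (2 * t i₀) = m⟩ := hint i₀
    rw [div_mul_cancel_right₀ hti₀] at hm
    have h2m : ((2 * m : ℤ) : ℝ) = 1 := by
      push_cast
      rw [← hm]
      norm_num
    have : 2 * m = 1 := by exact_mod_cast h2m
    omega
  · have hτd : pairing (fun i => t i / (2 * t i₀)) d
        = ((∑ i, t i * d i : ℚ) : ℝ) / (2 * t i₀) := by
      simp [pairing, Finset.sum_div, div_mul_eq_mul_div]
    rw [hτd, ht d hd, Rat.cast_zero, zero_div]

end Pairing

theorem statement10_general {V : Type*} [Fintype V] (B : Matrix V V ℝ)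
    (hirr : ∀ u v : V, Relation.TransGen (fun a b => (a, b) ∈ Bedges B) u v)
    (ν : ℕ) (f : V × V → (Fin ν → ℤ))
    (hcoh : ∀ t : Fin ν → ℝ, (¬ ∀ i, ∃ m : ℤ, t i = (m : ℝ)) →
      ¬ ∃ (c : ℝ) (h : V → ℝ), ∀ u v : V, (u, v) ∈ Bedges B →
        pairing t (f (u, v)) = c + h v - h u) :
    Finite (GammaGroup (Bedges B) Set.univ f ⧸
      (DeltaGroup (Bedges B) Set.univ f).addSubgroupOf
        (GammaGroup (Bedges B) Set.univ f)) := by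
  set Δ := DeltaGroup (Bedges B) Set.univ f
  have : Finite ((Fin ν → ℤ) ⧸ Δ) :=
    finite_quotient_of_forall_annihilator_eq_zero Δ fun t ht => by
      by_contra ht0
      obtain ⟨τ, hτ, hcob⟩ := exists_nonintegral_cohomologous_of_annihilator hirr f ht0 ht
      exact hcoh τ hτ hcob
  have : Δ.FiniteIndex := AddSubgroup.finiteIndex_of_finite_quotient
  have := Δ.isFiniteRelIndex_of_finiteIndex (K := GammaGroup (Bedges B) Set.univ f)
  infer_instance

/-- Let `B` be an irreducible 0–1 matrix of period `p` with edge set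
`E` and `f : E → ℤ^ν`. If for every `t ∈ ℝ^ν \ ℤ^ν` the function `(u,v) ↦ ⟨t, f(u,v)⟩`
is not cohomologous to a constant, then the quotient group `Γ_f/Δ_f` is finite. -/
theorem statement10 {V : Type*} [Fintype V] (B : Matrix V V ℝ)
    (hB01 : ∀ u v, B u v = 0 ∨ B u v = 1)
    (hirr : ∀ u v : V, Relation.TransGen (fun a b => (a, b) ∈ Bedges B) u v)
    (p : ℕ) (hp : IsPeriod (Bedges B) Set.univ p)
    (ν : ℕ) (f : V × V → (Fin ν → ℤ))
    (hcoh : ∀ t : Fin ν → ℝ, (¬ ∀ i, ∃ m : ℤ, t i = (m : ℝ)) →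
      ¬ ∃ (c : ℝ) (h : V → ℝ), ∀ u v : V, (u, v) ∈ Bedges B →
        pairing t (f (u, v)) = c + h v - h u) :
    Finite (GammaGroup (Bedges B) Set.univ f ⧸
      (DeltaGroup (Bedges B) Set.univ f).addSubgroupOf
        (GammaGroup (Bedges B) Set.univ f)) :=
  statement10_general B hirr ν f hcoh

end Paper
end
end
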